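/- Let N, n, k be non-negative integers. The number of partitions of n into exactly k parts, all of which are odd and at most 2N−2k+1, equals the number of partitions of n into distinct parts ≤ N whose alternating sum λ₁ − λ₂ + λ₃ − λ₄ + … equals k. -/

import Mathlib

def IsDistinctPartition (π : List ℕ) : Prop :=
  π.Chain' (· > ·) ∧ ∀ p ∈ π, 0 < p

def IsPartition (π : List ℕ) : Prop :=
  π.Chain' (· ≥ ·) ∧ ∀ p ∈ π, 0 < p

def oddIdxOdd (π : List ℕ) : ℕ :=
  (π.zipIdx.map Prod.swap |>.filter fun p => p.1 % 2 == 0 && p.2 % 2 == 1).length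

def evenIdxOdd (π : List ℕ) : ℕ :=
  (π.zipIdx.map Prod.swap |>.filter fun p => p.1 % 2 == 1 && p.2 % 2 == 1).length

def bgRank (π : List ℕ) : ℤ := (oddIdxOdd π : ℤ) - evenIdxOdd π

def altSum : List ℕ → ℤ
  | [] => 0
  | a :: t => (a : ℤ) - altSum t

noncomputable def gaussPoly : ℕ → ℕ → Polynomial ℚ
  | _, 0 => 1
  | 0, _ + 1 => 0
  | m + 1, r + 1 => gaussPoly m r + Polynomial.X ^ (r + 1) * gaussPoly m (r + 1)

noncomputable def gaussZ (m : ℕ) (r : ℤ) : Polynomial ℚ :=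
  if 0 ≤ r then gaussPoly m r.toNat else 0

/-!
Both sides have generating function `q ^ k [N, k]` evaluated at `q ^ 2`, where `[N, k]` is the
Gaussian binomial `gaussPoly N k`. For the odd parts, splitting off a largest part equal to its
maximal value `2 (N - k) + 1` gives the `q`-Pascal rule `[N + 1, k + 1] = q ^ (N - k) [N, k] +
[N, k + 1]`. For the distinct parts, splitting off a largest part `N + 1` turns the alternating sum
`k` into `N + 1 - k`, which gives the same rule once the symmetry `[N, j] = [N, N - j]` is used.
-/

open Polynomial

theorem gaussPoly_zero_right (m : ℕ) : gaussPoly m 0 = 1 := by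
  cases m <;> rfl

theorem gaussPoly_succ_succ (m r : ℕ) :
    gaussPoly (m + 1) (r + 1) = gaussPoly m r + X ^ (r + 1) * gaussPoly m (r + 1) :=
  rfl

theorem gaussPoly_eq_zero_of_lt {m r : ℕ} (h : m < r) : gaussPoly m r = 0 := by
  induction m generalizing r with
  | zero => obtain ⟨r, rfl⟩ := Nat.exists_eq_add_one_of_ne_zero h.ne'; rfl
  | succ m ih =>
    obtain ⟨r, rfl⟩ := Nat.exists_eq_add_one_of_ne_zero (by omega : r ≠ 0)
    rw [gaussPoly_succ_succ, ih (by omega), ih (by omega), mul_zero, add_zero]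

theorem gaussPoly_self (m : ℕ) : gaussPoly m m = 1 := by
  induction m with
  | zero => rfl
  | succ m ih =>
    rw [gaussPoly_succ_succ, ih, gaussPoly_eq_zero_of_lt m.lt_succ_self, mul_zero, add_zero]

theorem gaussPoly_succ_succ' (m r : ℕ) :
    gaussPoly (m + 1) (r + 1) = X ^ (m - r) * gaussPoly m r + gaussPoly m (r + 1) := by
  induction m generalizing r with
  | zero =>
    rcases r with _ | r
    · simp [gaussPoly_succ_succ, gaussPoly_zero_right, gaussPoly_eq_zero_of_lt]
    · simp [gaussPoly_eq_zero_of_lt]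
  | succ m ih =>
    rcases r with _ | r
    · have h0 : gaussPoly (m + 2) 1 = 1 + X * gaussPoly (m + 1) 1 := by
        simpa [gaussPoly_zero_right] using gaussPoly_succ_succ (m + 1) 0
      have h1 : gaussPoly (m + 1) 1 = 1 + X * gaussPoly m 1 := by
        simpa [gaussPoly_zero_right] using gaussPoly_succ_succ m 0
      have h2 : gaussPoly (m + 1) 1 = X ^ m + gaussPoly m 1 := by
        simpa [gaussPoly_zero_right] using ih 0
      simp only [Nat.sub_zero, gaussPoly_zero_right, mul_one]
      linear_combination h0 + X * h2 - h1
    · have key : X ^ (r + 2) * X ^ (m - (r + 1)) * gaussPoly m (r + 1) =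
          X ^ (m - r) * X ^ (r + 1) * gaussPoly m (r + 1) := by
        rcases lt_or_ge r m with h | h
        · rw [← pow_add, ← pow_add]; congr 2; omega
        · rw [gaussPoly_eq_zero_of_lt (by omega), mul_zero, mul_zero]
      rw [Nat.add_sub_add_right]
      linear_combination gaussPoly_succ_succ (m + 1) (r + 1) + ih r + X ^ (r + 2) * ih (r + 1)
        - X ^ (m - r) * gaussPoly_succ_succ m r - gaussPoly_succ_succ m (r + 1) + key

theorem gaussPoly_symm {m r : ℕ} (h : r ≤ m) : gaussPoly m (m - r) = gaussPoly m r := by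
  induction m generalizing r with
  | zero =>
    obtain rfl := Nat.le_zero.mp h
    rfl
  | succ m ih =>
    rcases r with _ | r
    · rw [Nat.sub_zero, gaussPoly_self, gaussPoly_zero_right]
    rcases (show r = m ∨ r < m by omega) with rfl | hr
    · rw [Nat.sub_self, gaussPoly_self, gaussPoly_zero_right]
    obtain ⟨s, hs⟩ : ∃ s, m - r = s + 1 := ⟨m - r - 1, by omega⟩
    calc gaussPoly (m + 1) (m + 1 - (r + 1)) = gaussPoly (m + 1) (s + 1) := by
          rw [Nat.add_sub_add_right, hs]
      _ = X ^ (r + 1) * gaussPoly m (m - (r + 1)) + gaussPoly m (m - r) := by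
          rw [gaussPoly_succ_succ', hs, show m - s = r + 1 by omega, show s = m - (r + 1) by omega]
      _ = gaussPoly (m + 1) (r + 1) := by
          rw [ih (by omega), ih (by omega), gaussPoly_succ_succ, add_comm]

noncomputable def oddGaussPoly (N k : ℕ) : ℚ[X] := X ^ k * expand ℚ 2 (gaussPoly N k)

theorem oddGaussPoly_zero_right (N : ℕ) : oddGaussPoly N 0 = 1 := by
  simp [oddGaussPoly, gaussPoly_zero_right]

theorem oddGaussPoly_eq_zero_of_lt {N k : ℕ} (h : N < k) : oddGaussPoly N k = 0 := by
  simp [oddGaussPoly, gaussPoly_eq_zero_of_lt h]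

theorem oddGaussPoly_succ_succ (N k : ℕ) :
    oddGaussPoly (N + 1) (k + 1) =
      X ^ (2 * (N - k) + 1) * oddGaussPoly N k + oddGaussPoly N (k + 1) := by
  simp only [oddGaussPoly, gaussPoly_succ_succ', map_add, map_mul, map_pow, expand_X]
  ring

theorem oddGaussPoly_succ {N k : ℕ} (h : k ≤ N + 1) :
    oddGaussPoly (N + 1) k = X ^ (N + 1) * oddGaussPoly N (N + 1 - k) + oddGaussPoly N k := by
  rcases k with _ | k
  · simp [oddGaussPoly_zero_right, oddGaussPoly_eq_zero_of_lt]
  obtain ⟨d, rfl⟩ : ∃ d, N = k + d := ⟨N - k, by omega⟩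
  rw [oddGaussPoly_succ_succ, Nat.add_sub_add_right]
  unfold oddGaussPoly
  rw [gaussPoly_symm (Nat.le_add_right k d), Nat.add_sub_cancel_left]
  ring

section ListCount

variable {α : Type*}

def subtypeHeadEqEquiv (P : List α → Prop) (a : α) :
    {l : {l // P l} // l.1.head? = some a} ≃ {t // P (a :: t)} where
  toFun l := ⟨l.1.1.tail, by
    obtain ⟨⟨_ | ⟨b, t⟩, hP⟩, ⟨⟩⟩ := l
    exact hP⟩
  invFun t := ⟨⟨a :: t.1, t.2⟩, rfl⟩
  left_inv := by rintro ⟨⟨_ | ⟨b, t⟩, hP⟩, ⟨⟩⟩; rfl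
  right_inv _ := rfl

theorem card_eq_ite_add_card {P Q R : List α → Prop} (hP : {l | P l}.Finite) (a : α) (c : Prop)
    [Decidable c] (hcons : ∀ t, P (a :: t) ↔ c ∧ Q t)
    (hrest : ∀ l, P l ∧ l.head? ≠ some a ↔ R l) :
    Nat.card {l // P l} = (if c then Nat.card {t // Q t} else 0) + Nat.card {l // R l} := by
  classical
  have : Finite {l // P l} := hP
  rw [← Nat.card_congr (Equiv.sumCompl fun l : {l // P l} => l.1.head? = some a), Nat.card_sum,
    Nat.card_congr (subtypeHeadEqEquiv P a), Nat.card_congr (Equiv.subtypeEquivRight hcons),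
    Nat.card_congr ((Equiv.subtypeSubtypeEquivSubtypeInter P _).trans
      (Equiv.subtypeEquivRight hrest))]
  split_ifs with h <;> simp [h]

theorem card_eq_ite_of_iff_nil {P : List α → Prop} (c : Prop) [Decidable c]
    (h : ∀ l, P l ↔ l = [] ∧ c) : Nat.card {l // P l} = if c then 1 else 0 := by
  rw [Nat.card_congr (Equiv.subtypeEquivRight h)]
  split_ifs with hc <;> simp [hc]

end ListCount

theorem finite_of_forall_pos_of_sum_eq {P : List ℕ → Prop} (n : ℕ)
    (h : ∀ l, P l → (∀ p ∈ l, 0 < p) ∧ l.sum = n) : {l | P l}.Finite :=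
  Set.finite_coe_iff.mp <| Finite.of_injective
    (fun l => (⟨l.1, fun hi => (h l.1 l.2).1 _ hi, (h l.1 l.2).2⟩ : Composition n))
    fun _ _ hl => Subtype.ext (congrArg Composition.blocks hl)

theorem isPartition_nil : IsPartition [] := by simp [IsPartition, List.Chain']

theorem isPartition_cons {a : ℕ} {t : List ℕ} :
    IsPartition (a :: t) ↔ (∀ p ∈ t, p ≤ a) ∧ 0 < a ∧ IsPartition t := by
  simp only [IsPartition, List.Chain', List.isChain_iff_pairwise, List.pairwise_cons,
    List.forall_mem_cons, ge_iff_le]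
  tauto

theorem isDistinctPartition_cons {a : ℕ} {t : List ℕ} :
    IsDistinctPartition (a :: t) ↔ (∀ p ∈ t, p < a) ∧ 0 < a ∧ IsDistinctPartition t := by
  simp only [IsDistinctPartition, List.Chain', List.isChain_iff_pairwise, List.pairwise_cons,
    List.forall_mem_cons, gt_iff_lt]
  tauto

theorem altSum_nonneg_and_le {l : List ℕ} {N : ℕ} (hl : l.Pairwise (· ≥ ·))
    (hN : ∀ p ∈ l, p ≤ N) : 0 ≤ altSum l ∧ altSum l ≤ N := by
  induction l generalizing N with
  | nil => simp [altSum]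
  | cons a t ih =>
    rw [List.pairwise_cons] at hl
    have := ih hl.2 hl.1
    have := hN a List.mem_cons_self
    simp only [altSum]
    omega

noncomputable def oddPartitionCount (N k n : ℕ) : ℕ :=
  Nat.card {π : List ℕ // IsPartition π ∧ π.length = k ∧
    (∀ p ∈ π, p % 2 = 1 ∧ (p : ℤ) ≤ 2 * (N : ℤ) - 2 * (k : ℤ) + 1) ∧ π.sum = n}

theorem oddPartitionCount_zero (N n : ℕ) :
    oddPartitionCount N 0 n = if n = 0 then 1 else 0 := by
  refine card_eq_ite_of_iff_nil _ fun l => ⟨?_, ?_⟩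
  · rintro ⟨-, hlen, -, rfl⟩
    obtain rfl := List.length_eq_zero_iff.mp hlen
    simp
  · rintro ⟨rfl, rfl⟩
    exact ⟨isPartition_nil, rfl, by simp, rfl⟩

theorem oddPartitionCount_eq_zero_of_lt {N k : ℕ} (h : N < k) (n : ℕ) :
    oddPartitionCount N k n = 0 := by
  refine Nat.card_eq_zero.mpr (Or.inl ⟨?_⟩)
  rintro ⟨l, ⟨-, hpos⟩, hlen, hodd, -⟩
  obtain ⟨p, hp⟩ := List.exists_mem_of_length_pos (by omega : 0 < l.length)
  have := hpos p hp
  have := (hodd p hp).2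
  omega

theorem oddPartitionCount_succ_succ {N k : ℕ} (h : k ≤ N) (n : ℕ) :
    oddPartitionCount (N + 1) (k + 1) n =
      (if 2 * (N - k) + 1 ≤ n then oddPartitionCount N k (n - (2 * (N - k) + 1)) else 0) +
        oddPartitionCount N (k + 1) n := by
  have hbound :
      2 * ((N + 1 : ℕ) : ℤ) - 2 * ((k + 1 : ℕ) : ℤ) + 1 = 2 * (N : ℤ) - 2 * k + 1 := by
    push_cast; ring
  have hbound' : 2 * (N : ℤ) - 2 * ((k + 1 : ℕ) : ℤ) + 1 = 2 * (N : ℤ) - 2 * k - 1 := by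
    push_cast; ring
  unfold oddPartitionCount
  refine card_eq_ite_add_card (finite_of_forall_pos_of_sum_eq n fun l hl => ⟨hl.1.2, hl.2.2.2⟩)
    (2 * (N - k) + 1) _ (fun t => ?_) (fun l => ?_)
  · simp only [isPartition_cons, List.length_cons, List.forall_mem_cons, List.sum_cons, hbound]
    constructor
    · rintro ⟨⟨-, -, ht⟩, hlen, ⟨-, hbd⟩, hsum⟩
      exact ⟨by omega, ht, by omega, hbd, by omega⟩
    · rintro ⟨hn, ht, hlen, hbd, hsum⟩
      refine ⟨⟨fun p hp => ?_, by omega, ht⟩, by omega, ⟨⟨by omega, by omega⟩, hbd⟩,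
        by omega⟩
      have := (hbd p hp).2
      omega
  · rcases l with _ | ⟨b, t⟩
    · simp
    simp only [isPartition_cons, List.length_cons, List.forall_mem_cons, List.head?_cons, ne_eq,
      Option.some.injEq, hbound, hbound']
    constructor
    · rintro ⟨⟨hpart, hlen, ⟨hb, hbd⟩, hsum⟩, hne⟩
      refine ⟨hpart, hlen, ⟨⟨hb.1, ?_⟩, fun p hp => ⟨(hbd p hp).1, ?_⟩⟩, hsum⟩
      · omega
      · have := hpart.1 p hp
        omega
    · rintro ⟨hpart, hlen, ⟨hb, hbd⟩, hsum⟩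
      refine
        ⟨⟨hpart, hlen, ⟨⟨hb.1, ?_⟩, fun p hp => ⟨(hbd p hp).1, ?_⟩⟩, hsum⟩, ?_⟩
      · omega
      · have := (hbd p hp).2
        omega
      · omega

noncomputable def distinctPartitionCount (N k n : ℕ) : ℕ :=
  Nat.card {π : List ℕ // IsDistinctPartition π ∧ (∀ p ∈ π, p ≤ N) ∧
    π.sum = n ∧ altSum π = (k : ℤ)}

theorem distinctPartitionCount_zero_zero (n : ℕ) :
    distinctPartitionCount 0 0 n = if n = 0 then 1 else 0 := by
  refine card_eq_ite_of_iff_nil _ fun l => ⟨?_, ?_⟩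
  · rintro ⟨⟨-, hpos⟩, hle, rfl, -⟩
    obtain rfl : l = [] := List.eq_nil_iff_forall_not_mem.mpr fun p hp => by
      have := hpos p hp
      have := hle p hp
      omega
    simp
  · rintro ⟨rfl, rfl⟩
    exact ⟨by simp [IsDistinctPartition, List.Chain'], by simp, rfl, rfl⟩

theorem distinctPartitionCount_eq_zero_of_lt {N k : ℕ} (h : N < k) (n : ℕ) :
    distinctPartitionCount N k n = 0 := by
  refine Nat.card_eq_zero.mpr (Or.inl ⟨?_⟩)
  rintro ⟨l, ⟨hl, -⟩, hle, -, hk⟩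
  have := altSum_nonneg_and_le (List.isChain_iff_pairwise.mp hl |>.imp le_of_lt) hle
  omega

theorem distinctPartitionCount_succ {N k : ℕ} (h : k ≤ N + 1) (n : ℕ) :
    distinctPartitionCount (N + 1) k n =
      (if N + 1 ≤ n then distinctPartitionCount N (N + 1 - k) (n - (N + 1)) else 0) +
        distinctPartitionCount N k n := by
  unfold distinctPartitionCount
  refine card_eq_ite_add_card (finite_of_forall_pos_of_sum_eq n fun l hl => ⟨hl.1.2, hl.2.2.1⟩)
    (N + 1) _ (fun t => ?_) (fun l => ?_)
  · simp only [isDistinctPartition_cons, List.forall_mem_cons, List.sum_cons, altSum]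
    constructor
    · rintro ⟨⟨hlt, -, ht⟩, ⟨-, -⟩, hsum, halt⟩
      exact ⟨by omega, ht, fun p hp => by have := hlt p hp; omega, by omega, by omega⟩
    · rintro ⟨hn, ht, hle, hsum, halt⟩
      refine ⟨⟨fun p hp => ?_, by omega, ht⟩, ⟨le_rfl, fun p hp => ?_⟩, by omega,
        by omega⟩
      all_goals have := hle p hp; omega
  · rcases l with _ | ⟨b, t⟩
    · simp
    simp only [isDistinctPartition_cons, List.forall_mem_cons, List.head?_cons, ne_eq,
      Option.some.injEq]
    constructor
    · rintro ⟨⟨⟨hlt, hb, ht⟩, ⟨hbN, -⟩, hsum, halt⟩, hne⟩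
      refine ⟨⟨hlt, hb, ht⟩, ⟨by omega, fun p hp => ?_⟩, hsum, halt⟩
      have := hlt p hp
      omega
    · rintro ⟨hpart, ⟨hbN, hle⟩, hsum, halt⟩
      refine ⟨⟨hpart, ⟨by omega, fun p hp => ?_⟩, hsum, halt⟩, by omega⟩
      have := hle p hp
      omega

theorem oddPartitionCount_eq_coeff (N k n : ℕ) :
    (oddPartitionCount N k n : ℚ) = (oddGaussPoly N k).coeff n := by
  induction N generalizing k n with
  | zero =>
    rcases k with _ | k
    · simp [oddPartitionCount_zero, oddGaussPoly_zero_right, coeff_one]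
    · simp [oddPartitionCount_eq_zero_of_lt, oddGaussPoly_eq_zero_of_lt]
  | succ N ih =>
    rcases k with _ | k
    · simp [oddPartitionCount_zero, oddGaussPoly_zero_right, coeff_one]
    rcases lt_or_ge N k with h | h
    · simp [oddPartitionCount_eq_zero_of_lt, oddGaussPoly_eq_zero_of_lt, h]
    rw [oddPartitionCount_succ_succ h, oddGaussPoly_succ_succ, coeff_add, coeff_X_pow_mul', ← ih,
      ← ih]
    split_ifs <;> simp

theorem distinctPartitionCount_eq_coeff (N k n : ℕ) :
    (distinctPartitionCount N k n : ℚ) = (oddGaussPoly N k).coeff n := by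
  induction N generalizing k n with
  | zero =>
    rcases k with _ | k
    · simp [distinctPartitionCount_zero_zero, oddGaussPoly_zero_right, coeff_one]
    · simp [distinctPartitionCount_eq_zero_of_lt, oddGaussPoly_eq_zero_of_lt]
  | succ N ih =>
    rcases lt_or_ge (N + 1) k with h | h
    · simp [distinctPartitionCount_eq_zero_of_lt, oddGaussPoly_eq_zero_of_lt, h]
    rw [distinctPartitionCount_succ h, oddGaussPoly_succ h, coeff_add, coeff_X_pow_mul', ← ih,
      ← ih]
    split_ifs <;> simp

theorem stmt14 (N n k : ℕ) :
    Nat.card {π : List ℕ // IsPartition π ∧ π.length = k ∧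
      (∀ p ∈ π, p % 2 = 1 ∧ (p : ℤ) ≤ 2 * (N : ℤ) - 2 * (k : ℤ) + 1) ∧ π.sum = n} =
    Nat.card {π : List ℕ // IsDistinctPartition π ∧ (∀ p ∈ π, p ≤ N) ∧
      π.sum = n ∧ altSum π = (k : ℤ)} :=
  Nat.cast_injective (R := ℚ)
    ((oddPartitionCount_eq_coeff N k n).trans (distinctPartitionCount_eq_coeff N k n).symm)
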